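/- Under the model L^b = C ⊕ W^b with W^b i.i.d. Bernoulli and independent of C, the MAP decoding rule for the message U from L satisfies: argmax_u P(U = u | L = l) = A·l^b ⊕ argmax_w P(W_u^b = w | L = l), where W_u^b = A·W^b and A is the pseudo-inverse of the encoder. That is, MAP decoding of U is equivalent to MAP detection of the message bit-flip sequence. -/

import Mathlib

open MeasureTheory ProbabilityTheory Matrix

/-- Hard decision of an LLR: `1` if negative, `0` otherwise. -/
noncomputable def hardDec (x : ℝ) : ZMod 2 := if x < 0 then 1 else 0

theorem Equiv.apply_eq_of_unique_maximizers {α β γ : Type*} [Preorder γ] (e : β ≃ α)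
    (g : α → γ) {x : α} {y : β} (hx : ∀ a, a ≠ x → g a < g x)
    (hy : ∀ b, b ≠ y → g (e b) < g (e y)) : e y = x := by
  by_contra hne
  have hxy : e.symm x ≠ y := fun h => hne (by rw [← h, e.apply_symm_apply])
  have hlt := hy (e.symm x) hxy
  rw [e.apply_symm_apply] at hlt
  exact lt_asymm hlt (hx (e y) hne)

theorem ProbabilityTheory.cond_congr_of_inter_eq {Ω : Type*} [MeasurableSpace Ω]
    (μ : Measure Ω) {s t t' : Set Ω} (hs : MeasurableSet s) (h : s ∩ t = s ∩ t') :
    μ[t|s] = μ[t'|s] := by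
  rw [← cond_inter_self hs, h, cond_inter_self hs]

theorem ZModModule.add_eq_iff_eq_add {G : Type*} [AddCommGroup G] [Module (ZMod 2) G]
    {a u w : G} : a + u = w ↔ u = a + w := by
  rw [← eq_neg_add_iff_add_eq, ZModModule.neg_eq_self]

theorem map_decoding_eq_map_bitflip_detection_general
    {Ω : Type*} [MeasurableSpace Ω] (μ : Measure Ω)
    (n k : ℕ)
    (A : Matrix (Fin k) (Fin n) (ZMod 2))
    (U : Ω → (Fin k → ZMod 2)) (L : Ω → (Fin n → ℝ))
    (hL : Measurable L)
    -- the message bit-flip sequence `W_u^b = A·L^b ⊕ U` (xor is addition over `ZMod 2`)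
    (Wub : Ω → (Fin k → ZMod 2))
    (hWub : Wub = fun ω => A.mulVec (fun i => hardDec (L ω i)) + U ω)
    (l : Fin n → ℝ)
    (ustar wstar : Fin k → ZMod 2)
    -- `ustar` is the unique MAP estimate of `U` given `L = l`
    (hu : ∀ u, u ≠ ustar →
      μ[|L ⁻¹' {l}] {ω | U ω = u} < μ[|L ⁻¹' {l}] {ω | U ω = ustar})
    -- `wstar` is the unique MAP estimate of `W_u^b` given `L = l`
    (hw : ∀ w, w ≠ wstar →
      μ[|L ⁻¹' {l}] {ω | Wub ω = w} < μ[|L ⁻¹' {l}] {ω | Wub ω = wstar}) :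
    ustar = A.mulVec (fun i => hardDec (l i)) + wstar := by
  set e := Equiv.addLeft (A.mulVec (fun i => hardDec (l i)))
  -- on the fiber `L = l`, the bit-flip sequence is the message translated by `A·l^b`
  have hcond : ∀ w, μ[{ω | Wub ω = w} | L ⁻¹' {l}] = μ[{ω | U ω = e w} | L ⁻¹' {l}] := by
    refine fun w => cond_congr_of_inter_eq μ (hL (measurableSet_singleton l)) ?_
    ext ω
    simp only [Set.mem_inter_iff, Set.mem_preimage, Set.mem_singleton_iff, Set.mem_ofPred_eq,
      and_congr_right_iff]
    rintro rfl
    simp only [hWub, e, Equiv.coe_addLeft, ZModModule.add_eq_iff_eq_add]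
  simp only [hcond] at hw
  exact (e.apply_eq_of_unique_maximizers (fun u => μ[{ω | U ω = u} | L ⁻¹' {l}]) hu hw).symm

/-- Under `L^b = C ⊕ W^b` with `C = Gᵀ·U` and `A·Gᵀ = I`, MAP decoding of the
message `U` from `L` is equivalent to MAP detection of the message bit-flip sequence
`W_u^b = A·W^b = A·L^b ⊕ U`: if `u*` is the unique maximizer of `P(U = u | L = l)` and `w*`
the unique maximizer of `P(W_u^b = w | L = l)`, then `u* = A·l^b ⊕ w*`. -/
theorem map_decoding_eq_map_bitflip_detection
    {Ω : Type*} [MeasurableSpace Ω] (μ : Measure Ω) [IsProbabilityMeasure μ]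
    (n k : ℕ)
    (G A : Matrix (Fin k) (Fin n) (ZMod 2)) (hA : A * Gᵀ = 1)
    (U : Ω → (Fin k → ZMod 2)) (L : Ω → (Fin n → ℝ))
    (hU : Measurable U) (hL : Measurable L)
    -- the message bit-flip sequence `W_u^b = A·L^b ⊕ U` (xor is addition over `ZMod 2`)
    (Wub : Ω → (Fin k → ZMod 2))
    (hWub : Wub = fun ω => A.mulVec (fun i => hardDec (L ω i)) + U ω)
    (l : Fin n → ℝ) (hl : μ (L ⁻¹' {l}) ≠ 0)
    (ustar wstar : Fin k → ZMod 2)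
    -- `ustar` is the unique MAP estimate of `U` given `L = l`
    (hu : ∀ u, u ≠ ustar →
      μ[|L ⁻¹' {l}] {ω | U ω = u} < μ[|L ⁻¹' {l}] {ω | U ω = ustar})
    -- `wstar` is the unique MAP estimate of `W_u^b` given `L = l`
    (hw : ∀ w, w ≠ wstar →
      μ[|L ⁻¹' {l}] {ω | Wub ω = w} < μ[|L ⁻¹' {l}] {ω | Wub ω = wstar}) :
    ustar = A.mulVec (fun i => hardDec (l i)) + wstar :=
  map_decoding_eq_map_bitflip_detection_general μ n k A U L hL Wub hWub l ustar wstar hu hw
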